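/- Let N ≥ 2, let U ⊆ ℝ^N be a nonempty connected open set, and let b : U → ℝ be a smooth nowhere-zero function. Then the metrics g_1^{ij}(u) = b(u) δ^{ij} and g_2^{ij}(u) = δ^{ij} on U are always almost compatible (the Nijenhuis tensor of the affinor v^i_j = b δ^i_j vanishes identically); and if g_1 and g_2 are compatible, then b is constant. -/

import Mathlib

open scoped BigOperators

/-- Partial derivative of a scalar function on `ℝ^N` in the `j`-th coordinate direction. -/
noncomputable def pd {N : ℕ} (f : (Fin N → ℝ) → ℝ) (j : Fin N) (u : Fin N → ℝ) : ℝ :=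
  fderiv ℝ f u (Pi.single j 1)

/-- Christoffel symbols `Γ^i_{jk}` of a contravariant metric `g` (with lower metric `g⁻¹`). -/
noncomputable def christoffelLow {N : ℕ} (g : (Fin N → ℝ) → Matrix (Fin N) (Fin N) ℝ)
    (i j k : Fin N) (u : Fin N → ℝ) : ℝ :=
  (1 / 2) * ∑ s, g u i s *
    (pd (fun v => (g v)⁻¹ s k) j u + pd (fun v => (g v)⁻¹ j s) k u
      - pd (fun v => (g v)⁻¹ j k) s u)

/-- Christoffel symbols with raised index `Γ^{ij}_k = g^{is} Γ^j_{sk}`. -/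
noncomputable def christoffelUp {N : ℕ} (g : (Fin N → ℝ) → Matrix (Fin N) (Fin N) ℝ)
    (i j k : Fin N) (u : Fin N → ℝ) : ℝ :=
  ∑ s, g u i s * christoffelLow g j s k u

/-- Riemann curvature tensor `R^i_{jkl}`. -/
noncomputable def riemannLow {N : ℕ} (g : (Fin N → ℝ) → Matrix (Fin N) (Fin N) ℝ)
    (i j k l : Fin N) (u : Fin N → ℝ) : ℝ :=
  pd (christoffelLow g i j l) k u - pd (christoffelLow g i j k) l u
    + ∑ p, christoffelLow g i p k u * christoffelLow g p j l u
    - ∑ p, christoffelLow g i p l u * christoffelLow g p j k u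

/-- Riemann curvature tensor with raised index `R^{ij}_{kl} = g^{is} R^j_{skl}`. -/
noncomputable def riemannUp {N : ℕ} (g : (Fin N → ℝ) → Matrix (Fin N) (Fin N) ℝ)
    (i j k l : Fin N) (u : Fin N → ℝ) : ℝ :=
  ∑ s, g u i s * riemannLow g j s k l u

/-- A smooth contravariant metric on `U`: smooth, symmetric and invertible at every point. -/
def IsMetricOn {N : ℕ} (U : Set (Fin N → ℝ))
    (g : (Fin N → ℝ) → Matrix (Fin N) (Fin N) ℝ) : Prop :=
  (∀ i j, ContDiffOn ℝ (⊤ : ℕ∞) (fun u => g u i j) U) ∧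
  (∀ u ∈ U, (g u).IsSymm) ∧ (∀ u ∈ U, IsUnit (g u).det)

/-- Almost compatibility of two contravariant metrics on `U`. -/
def AlmostCompatibleOn {N : ℕ} (U : Set (Fin N → ℝ))
    (g₁ g₂ : (Fin N → ℝ) → Matrix (Fin N) (Fin N) ℝ) : Prop :=
  ∀ l₁ l₂ : ℝ, (∀ u ∈ U, IsUnit (l₁ • g₁ u + l₂ • g₂ u).det) →
    ∀ u ∈ U, ∀ i j k, christoffelUp (fun v => l₁ • g₁ v + l₂ • g₂ v) i j k u =
      l₁ * christoffelUp g₁ i j k u + l₂ * christoffelUp g₂ i j k u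

/-- Compatibility of two contravariant metrics on `U`. -/
def CompatibleOn {N : ℕ} (U : Set (Fin N → ℝ))
    (g₁ g₂ : (Fin N → ℝ) → Matrix (Fin N) (Fin N) ℝ) : Prop :=
  ∀ l₁ l₂ : ℝ, (∀ u ∈ U, IsUnit (l₁ • g₁ u + l₂ • g₂ u).det) →
    ∀ u ∈ U,
      (∀ i j k, christoffelUp (fun v => l₁ • g₁ v + l₂ • g₂ v) i j k u =
        l₁ * christoffelUp g₁ i j k u + l₂ * christoffelUp g₂ i j k u) ∧
      (∀ i j k l, riemannUp (fun v => l₁ • g₁ v + l₂ • g₂ v) i j k l u =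
        l₁ * riemannUp g₁ i j k l u + l₂ * riemannUp g₂ i j k l u)

/-- Nijenhuis tensor `N^k_{ij}` of an affinor `v^i_j(u)`. -/
noncomputable def nijenhuis {N : ℕ} (v : (Fin N → ℝ) → Matrix (Fin N) (Fin N) ℝ)
    (k i j : Fin N) (u : Fin N → ℝ) : ℝ :=
  ∑ s, (v u s i * pd (fun w => v w k j) s u - v u s j * pd (fun w => v w k i) s u
    + v u k s * pd (fun w => v w s i) j u - v u k s * pd (fun w => v w s j) i u)

/-- The affinor `v^i_j = g₁^{is} g_{2,sj}` of a pair of contravariant metrics. -/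
noncomputable def affinor {N : ℕ} (g₁ g₂ : (Fin N → ℝ) → Matrix (Fin N) (Fin N) ℝ)
    (u : Fin N → ℝ) : Matrix (Fin N) (Fin N) ℝ :=
  g₁ u * (g₂ u)⁻¹

/-- A nonsingular pair of metrics: at every point the roots of
`det(g₁ - λ g₂) = 0` are real and pairwise distinct. -/
def NonsingularPairOn {N : ℕ} (U : Set (Fin N → ℝ))
    (g₁ g₂ : (Fin N → ℝ) → Matrix (Fin N) (Fin N) ℝ) : Prop :=
  ∀ u ∈ U, ∃ ev : Fin N → ℝ, Function.Injective ev ∧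
    ∀ i, (g₁ u - ev i • g₂ u).det = 0

/-- Flatness of a contravariant metric on `U`. -/
def IsFlatOn {N : ℕ} (U : Set (Fin N → ℝ))
    (g : (Fin N → ℝ) → Matrix (Fin N) (Fin N) ℝ) : Prop :=
  ∀ u ∈ U, ∀ i j k l, riemannLow g i j k l u = 0

/-- Constant Riemannian curvature `K` on `U`. -/
def HasConstCurvatureOn {N : ℕ} (U : Set (Fin N → ℝ))
    (g : (Fin N → ℝ) → Matrix (Fin N) (Fin N) ℝ) (K : ℝ) : Prop :=
  ∀ u ∈ U, ∀ i j k l, riemannUp g i j k l u =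
    K * ((if i = l then (1 : ℝ) else 0) * (if j = k then (1 : ℝ) else 0)
      - (if i = k then (1 : ℝ) else 0) * (if j = l then (1 : ℝ) else 0))

/-- The tensor `M^{ijk}` of a pair of contravariant metrics. -/
noncomputable def MTensor {N : ℕ} (g₁ g₂ : (Fin N → ℝ) → Matrix (Fin N) (Fin N) ℝ)
    (i j k : Fin N) (u : Fin N → ℝ) : ℝ :=
  ∑ s, (g₁ u i s * christoffelUp g₂ j k s u - g₂ u j s * christoffelUp g₁ i k s u
    - g₁ u j s * christoffelUp g₂ i k s u + g₂ u i s * christoffelUp g₁ j k s u)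

lemma smul_one_inv {N : ℕ} {e : ℝ} (he : e ≠ 0) :
    (e • (1 : Matrix (Fin N) (Fin N) ℝ))⁻¹ = e⁻¹ • 1 := by
  apply Matrix.inv_eq_right_inv
  rw [Matrix.smul_mul, Matrix.mul_smul, one_mul, smul_smul, mul_inv_cancel₀ he, one_smul]

lemma smul_one_apply {N : ℕ} (e : ℝ) (i j : Fin N) :
    (e • (1 : Matrix (Fin N) (Fin N) ℝ)) i j = e * (if i = j then 1 else 0) := by
  simp [Matrix.one_apply]

-- differentiability of c at u
lemma diffAt_of_contDiffOn {N : ℕ} {U : Set (Fin N → ℝ)} {c : (Fin N → ℝ) → ℝ} {u : Fin N → ℝ}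
    (hU : IsOpen U) (hc : ContDiffOn ℝ (⊤ : ℕ∞) c U) (hu : u ∈ U) : DifferentiableAt ℝ c u :=
  (hc.differentiableOn (by simp)).differentiableAt (hU.mem_nhds hu)

-- pd of inverse: pd (fun v => (c v)⁻¹) j u
lemma pd_inv {N : ℕ} {U : Set (Fin N → ℝ)} {c : (Fin N → ℝ) → ℝ} {u : Fin N → ℝ}
    (hU : IsOpen U) (hc : ContDiffOn ℝ (⊤ : ℕ∞) c U) (hu : u ∈ U) (hne : c u ≠ 0) (j : Fin N) :
    pd (fun v => (c v)⁻¹) j u = -(pd c j u) / (c u)^2 := by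
  have hd := diffAt_of_contDiffOn hU hc hu
  have h1 : HasFDerivAt (fun v => (c v)⁻¹)
      ((-(ContinuousLinearMap.mulLeftRight ℝ ℝ) (c u)⁻¹ (c u)⁻¹).comp (fderiv ℝ c u)) u :=
    (hasFDerivAt_inv' hne).comp u hd.hasFDerivAt
  unfold pd
  rw [h1.fderiv]
  simp [ContinuousLinearMap.comp_apply, ContinuousLinearMap.mulLeftRight_apply, pd]
  rw [eq_div_iff (pow_ne_zero 2 hne)]
  ring_nf
  rw [← mul_pow, mul_inv_cancel₀ hne, one_pow, one_mul]

lemma pd_inv_entry {N : ℕ} {U : Set (Fin N → ℝ)} {c : (Fin N → ℝ) → ℝ} {u : Fin N → ℝ}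
    (hU : IsOpen U) (hc : ContDiffOn ℝ (⊤ : ℕ∞) c U) (hcne : ∀ v ∈ U, c v ≠ 0) (hu : u ∈ U)
    (s k j : Fin N) :
    pd (fun v => ((c v • (1 : Matrix (Fin N) (Fin N) ℝ))⁻¹) s k) j u
      = (if s = k then (1:ℝ) else 0) * (-(pd c j u) / (c u)^2) := by
  have hev : (fun v => ((c v • (1 : Matrix (Fin N) (Fin N) ℝ))⁻¹) s k) =ᶠ[nhds u]
      (fun v => if s = k then (c v)⁻¹ else 0) := by
    filter_upwards [hU.mem_nhds hu] with v hv
    rw [smul_one_inv (hcne v hv), smul_one_apply]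
    split <;> simp
  show fderiv ℝ _ u _ = _
  rw [Filter.EventuallyEq.fderiv_eq hev]
  by_cases h : s = k
  · simp only [h, if_true, one_mul]
    exact pd_inv hU hc hu (hcne u hu) j
  · simp [h]

lemma christoffelLow_smul_one {N : ℕ} {U : Set (Fin N → ℝ)} {c : (Fin N → ℝ) → ℝ}
    {u : Fin N → ℝ} (hU : IsOpen U) (hc : ContDiffOn ℝ (⊤ : ℕ∞) c U) (hcne : ∀ v ∈ U, c v ≠ 0)
    (hu : u ∈ U) (i j k : Fin N) :
    christoffelLow (fun v => c v • (1 : Matrix (Fin N) (Fin N) ℝ)) i j k u =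
      -(1/(2 * c u)) * (pd c j u * (if i = k then (1:ℝ) else 0)
        + pd c k u * (if j = i then (1:ℝ) else 0)
        - pd c i u * (if j = k then (1:ℝ) else 0)) := by
  unfold christoffelLow
  simp only [pd_inv_entry hU hc hcne hu, smul_one_apply]
  rw [Finset.sum_eq_single i]
  · have h0 : c u ≠ 0 := hcne u hu
    simp only [if_pos rfl, mul_one]
    split_ifs <;> field_simp <;> ring
  · intro s _ hs
    simp [if_neg (Ne.symm hs)]
  · simp

lemma christoffelUp_smul_one {N : ℕ} {U : Set (Fin N → ℝ)} {c : (Fin N → ℝ) → ℝ}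
    {u : Fin N → ℝ} (hU : IsOpen U) (hc : ContDiffOn ℝ (⊤ : ℕ∞) c U) (hcne : ∀ v ∈ U, c v ≠ 0)
    (hu : u ∈ U) (i j k : Fin N) :
    christoffelUp (fun v => c v • (1 : Matrix (Fin N) (Fin N) ℝ)) i j k u =
      -(1/2) * (pd c i u * (if j = k then (1:ℝ) else 0)
        + pd c k u * (if i = j then (1:ℝ) else 0)
        - pd c j u * (if i = k then (1:ℝ) else 0)) := by
  unfold christoffelUp
  rw [Finset.sum_eq_single i]
  · rw [christoffelLow_smul_one hU hc hcne hu]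
    beta_reduce
    simp only [smul_one_apply]
    have h0 : c u ≠ 0 := hcne u hu
    simp only [eq_self_iff_true, if_true, mul_one]
    split_ifs <;> field_simp <;> ring
  · intro s _ hs
    beta_reduce
    simp only [smul_one_apply]
    simp [if_neg (Ne.symm hs)]
  · simp

lemma diag_const_eq {N : ℕ} (x : ℝ) :
    Matrix.diagonal (fun _ : Fin N => x) = x • (1 : Matrix (Fin N) (Fin N) ℝ) := by
  ext i j
  by_cases h : i = j <;> simp [Matrix.diagonal_apply, Matrix.one_apply, h]

lemma det_smul_one {N : ℕ} (x : ℝ) :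
    (x • (1 : Matrix (Fin N) (Fin N) ℝ)).det = x ^ N := by
  rw [Matrix.det_smul, Matrix.det_one, Fintype.card_fin, mul_one]

-- derivative of scaled-shifted function
lemma pd_affine {N : ℕ} (b : (Fin N → ℝ) → ℝ) (l₁ l₂ : ℝ) (m : Fin N) (u : Fin N → ℝ)
    (hd : DifferentiableAt ℝ b u) :
    pd (fun v => l₁ * b v + l₂) m u = l₁ * pd b m u := by
  unfold pd
  rw [fderiv_add_const, fderiv_const_mul hd]
  simp

lemma pd_const {N : ℕ} (x : ℝ) (m : Fin N) (u : Fin N → ℝ) :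
    pd (fun _ => x) m u = 0 := by
  unfold pd
  rw [fderiv_fun_const]
  simp


lemma almost_compat {N : ℕ} (hN : 2 ≤ N) {U : Set (Fin N → ℝ)} (hUopen : IsOpen U)
    {b : (Fin N → ℝ) → ℝ} (hb : ContDiffOn ℝ (⊤ : ℕ∞) b U) (hbne : ∀ u ∈ U, b u ≠ 0) :
    AlmostCompatibleOn U (fun u => Matrix.diagonal (fun _ : Fin N => b u))
      (fun _ => (1 : Matrix (Fin N) (Fin N) ℝ)) := by
  intro l₁ l₂ hdet u hu i j k
  have hNne : N ≠ 0 := by omega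
  set c : (Fin N → ℝ) → ℝ := fun v => l₁ * b v + l₂ with hc_def
  have hcomb : (fun v => l₁ • (fun w => Matrix.diagonal (fun _ : Fin N => b w)) v
      + l₂ • (fun _ : Fin N → ℝ => (1 : Matrix (Fin N) (Fin N) ℝ)) v) = fun v => c v • (1 : Matrix (Fin N) (Fin N) ℝ) := by
    funext v
    show l₁ • Matrix.diagonal (fun _ : Fin N => b v) + l₂ • (1 : Matrix (Fin N) (Fin N) ℝ) = _
    rw [diag_const_eq, smul_smul, ← add_smul]
  have hcCD : ContDiffOn ℝ (⊤ : ℕ∞) c U := (contDiffOn_const.mul hb).add contDiffOn_const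
  have hcne : ∀ v ∈ U, c v ≠ 0 := by
    intro v hv
    have h := hdet v hv
    have h2 : (l₁ • Matrix.diagonal (fun _ : Fin N => b v) + l₂ • (1 : Matrix (Fin N) (Fin N) ℝ)) = c v • 1 := by
      rw [diag_const_eq, smul_smul, ← add_smul]
    rw [h2, det_smul_one, isUnit_iff_ne_zero] at h
    exact fun h0 => h (by rw [h0]; exact zero_pow hNne)
  have hg1 : (fun w => Matrix.diagonal (fun _ : Fin N => b w)) = (fun v => b v • (1 : Matrix (Fin N) (Fin N) ℝ)) :=
    funext fun v => diag_const_eq _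
  have hg2 : (fun _ : Fin N → ℝ => (1 : Matrix (Fin N) (Fin N) ℝ)) = (fun v : Fin N → ℝ => (fun _ : Fin N → ℝ => (1:ℝ)) v • (1 : Matrix (Fin N) (Fin N) ℝ)) := by
    funext v; rw [one_smul]
  rw [hcomb, hg1, hg2, christoffelUp_smul_one hUopen hcCD hcne hu,
    christoffelUp_smul_one hUopen hb hbne hu,
    christoffelUp_smul_one hUopen contDiffOn_const (fun v _ => one_ne_zero) hu]
  have hbd := diffAt_of_contDiffOn hUopen hb hu
  simp only [hc_def, pd_affine b l₁ l₂ _ u hbd, pd_const]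
  ring


lemma nijenhuis_vanish {N : ℕ} {b : (Fin N → ℝ) → ℝ} (u : Fin N → ℝ) (k i j : Fin N) :
    nijenhuis (affinor
      (fun u => Matrix.diagonal (fun _ : Fin N => b u))
      (fun _ => (1 : Matrix (Fin N) (Fin N) ℝ))) k i j u = 0 := by
  have haff : affinor (fun u => Matrix.diagonal (fun _ : Fin N => b u))
      (fun _ => (1 : Matrix (Fin N) (Fin N) ℝ)) = fun w => b w • (1 : Matrix (Fin N) (Fin N) ℝ) := by
    funext w
    show Matrix.diagonal (fun _ : Fin N => b w) * (1 : Matrix (Fin N) (Fin N) ℝ)⁻¹ = _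
    rw [inv_one, Matrix.mul_one, diag_const_eq]
  unfold nijenhuis
  rw [haff]
  simp only [smul_one_apply]
  rw [Finset.sum_sub_distrib, Finset.sum_add_distrib, Finset.sum_sub_distrib]
  have c1 : ∀ (m : Fin N) (F : Fin N → ℝ),
      ∑ s, b u * (if s = m then (1:ℝ) else 0) * F s = b u * F m := by
    intro m F
    rw [Finset.sum_eq_single m] <;> simp +contextual
  have c2 : ∀ (F : Fin N → ℝ),
      ∑ s, b u * (if k = s then (1:ℝ) else 0) * F s = b u * F k := by
    intro F
    rw [Finset.sum_eq_single k] <;> simp +contextual [Ne.symm]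
  rw [c1 i, c1 j, c2, c2]
  ring


noncomputable def scf {N : ℕ} (c : (Fin N → ℝ) → ℝ) (i j k : Fin N) : (Fin N → ℝ) → ℝ :=
  fun v => pd c j v * (if i = k then (1:ℝ) else 0) + pd c k v * (if j = i then (1:ℝ) else 0)
    - pd c i v * (if j = k then (1:ℝ) else 0)

lemma christoffelLow_scf {N : ℕ} {U : Set (Fin N → ℝ)} {c : (Fin N → ℝ) → ℝ}
    {u : Fin N → ℝ} (hU : IsOpen U) (hc : ContDiffOn ℝ (⊤ : ℕ∞) c U) (hcne : ∀ v ∈ U, c v ≠ 0)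
    (hu : u ∈ U) (i j k : Fin N) :
    christoffelLow (fun v => c v • (1 : Matrix (Fin N) (Fin N) ℝ)) i j k u =
      -(1/(2 * c u)) * scf c i j k u := by
  rw [christoffelLow_smul_one hU hc hcne hu]; rfl

lemma pd_diffAt {N : ℕ} {U : Set (Fin N → ℝ)} {c : (Fin N → ℝ) → ℝ} {u : Fin N → ℝ}
    (hU : IsOpen U) (hc : ContDiffOn ℝ (⊤ : ℕ∞) c U) (hu : u ∈ U) (m : Fin N) :
    DifferentiableAt ℝ (pd c m) u := by
  have h1 : ContDiffOn ℝ 1 (fderiv ℝ c) U := hc.fderiv_of_isOpen hU (WithTop.coe_le_coe.mpr le_top)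
  have h2 : ContDiffOn ℝ 1 (fun v => fderiv ℝ c v (Pi.single m 1)) U :=
    h1.clm_apply contDiffOn_const
  exact (h2.differentiableOn one_ne_zero).differentiableAt (hU.mem_nhds hu)

lemma scf_diffAt {N : ℕ} {U : Set (Fin N → ℝ)} {c : (Fin N → ℝ) → ℝ} {u : Fin N → ℝ}
    (hU : IsOpen U) (hc : ContDiffOn ℝ (⊤ : ℕ∞) c U) (hu : u ∈ U) (i j k : Fin N) :
    DifferentiableAt ℝ (scf c i j k) u :=
  (((pd_diffAt hU hc hu j).mul_const _).add ((pd_diffAt hU hc hu k).mul_const _)).sub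
    ((pd_diffAt hU hc hu i).mul_const _)

lemma pd_christoffelLow {N : ℕ} {U : Set (Fin N → ℝ)} {c : (Fin N → ℝ) → ℝ} {u : Fin N → ℝ}
    (hU : IsOpen U) (hc : ContDiffOn ℝ (⊤ : ℕ∞) c U) (hcne : ∀ v ∈ U, c v ≠ 0) (hu : u ∈ U)
    (i j l k : Fin N) :
    pd (christoffelLow (fun v => c v • (1 : Matrix (Fin N) (Fin N) ℝ)) i j l) k u =
      pd c k u / (2 * (c u)^2) * scf c i j l u - (1/(2 * c u)) * pd (scf c i j l) k u := by
  have hev : christoffelLow (fun v => c v • (1 : Matrix (Fin N) (Fin N) ℝ)) i j l =ᶠ[nhds u]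
      (fun v => -(1/2) * (c v)⁻¹ * scf c i j l v) := by
    filter_upwards [hU.mem_nhds hu] with v hv
    rw [christoffelLow_scf hU hc hcne hv]
    rw [one_div, mul_inv]
    ring
  show fderiv ℝ _ u _ = _
  rw [Filter.EventuallyEq.fderiv_eq hev]
  have hdinv : DifferentiableAt ℝ (fun v => (c v)⁻¹) u :=
    (diffAt_of_contDiffOn hU hc hu).inv (hcne u hu)
  have hF : DifferentiableAt ℝ (fun v => -(1/2) * (c v)⁻¹) u := hdinv.const_mul _
  have hG : DifferentiableAt ℝ (scf c i j l) u := scf_diffAt hU hc hu i j l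
  rw [fderiv_fun_mul hF hG]
  have h1 : fderiv ℝ (fun v => -(1/2) * (c v)⁻¹) u (Pi.single k 1)
      = -(1/2) * (-(fderiv ℝ c u (Pi.single k 1)) / (c u)^2) := by
    rw [fderiv_const_mul hdinv]
    have h2 := pd_inv hU hc hu (hcne u hu) k
    unfold pd at h2
    simp [h2]
  simp only [ContinuousLinearMap.add_apply, ContinuousLinearMap.smul_apply, smul_eq_mul, h1]
  have h0 : c u ≠ 0 := hcne u hu
  unfold pd
  field_simp
  ring


lemma riemannUp_smul_one {N : ℕ} {U : Set (Fin N → ℝ)} {c : (Fin N → ℝ) → ℝ} {u : Fin N → ℝ}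
    (hU : IsOpen U) (hc : ContDiffOn ℝ (⊤ : ℕ∞) c U) (hcne : ∀ v ∈ U, c v ≠ 0) (hu : u ∈ U)
    (i j k l : Fin N) :
    riemannUp (fun v => c v • (1 : Matrix (Fin N) (Fin N) ℝ)) i j k l u =
      (1/(2 * c u)) * (pd c k u * scf c j i l u - pd c l u * scf c j i k u)
      - (1/2) * (pd (scf c j i l) k u - pd (scf c j i k) l u)
      + (1/(4 * c u)) * (∑ p, (scf c j p k u * scf c p i l u
          - scf c j p l u * scf c p i k u)) := by
  have h0 : c u ≠ 0 := hcne u hu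
  have hprod : ∀ (k' l' : Fin N),
      ∑ p, christoffelLow (fun v => c v • (1 : Matrix (Fin N) (Fin N) ℝ)) j p k' u
        * christoffelLow (fun v => c v • (1 : Matrix (Fin N) (Fin N) ℝ)) p i l' u
      = (1/(4 * (c u)^2)) * ∑ p, scf c j p k' u * scf c p i l' u := by
    intro k' l'
    rw [Finset.mul_sum]
    refine Finset.sum_congr rfl fun p _ => ?_
    rw [christoffelLow_scf hU hc hcne hu, christoffelLow_scf hU hc hcne hu]
    ring
  unfold riemannUp
  rw [Finset.sum_eq_single i]
  · beta_reduce
    simp only [smul_one_apply, eq_self_iff_true, if_true, mul_one]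
    unfold riemannLow
    rw [pd_christoffelLow hU hc hcne hu, pd_christoffelLow hU hc hcne hu, hprod, hprod,
      Finset.sum_sub_distrib]
    field_simp
    ring
  · intro s _ hs
    beta_reduce
    simp only [smul_one_apply]
    simp [if_neg (Ne.symm hs)]
  · simp


lemma christoffelLow_one {N : ℕ} (i j k : Fin N) :
    christoffelLow (fun _ : Fin N → ℝ => (1 : Matrix (Fin N) (Fin N) ℝ)) i j k
      = fun _ => (0:ℝ) := by
  funext v
  unfold christoffelLow
  simp [pd_const]

lemma riemannUp_one {N : ℕ} (i j k l : Fin N) (u : Fin N → ℝ) :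
    riemannUp (fun _ : Fin N → ℝ => (1 : Matrix (Fin N) (Fin N) ℝ)) i j k l u = 0 := by
  unfold riemannUp riemannLow
  simp [christoffelLow_one, pd_const]

lemma pd_add_const {N : ℕ} (b : (Fin N → ℝ) → ℝ) (t : ℝ) (m : Fin N) (u : Fin N → ℝ) :
    pd (fun v => b v + t) m u = pd b m u := by
  unfold pd
  rw [fderiv_add_const]

lemma scf_add_const {N : ℕ} (b : (Fin N → ℝ) → ℝ) (t : ℝ) (i j k : Fin N) :
    scf (fun v => b v + t) i j k = scf b i j k := by
  funext v
  unfold scf pd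
  rw [fderiv_add_const]

lemma contDiffOn_add_const {N : ℕ} {U : Set (Fin N → ℝ)} {b : (Fin N → ℝ) → ℝ}
    (hb : ContDiffOn ℝ (⊤ : ℕ∞) b U) (t : ℝ) : ContDiffOn ℝ (⊤ : ℕ∞) (fun v => b v + t) U :=
  hb.add contDiffOn_const


lemma grad_zero {N : ℕ} (hN : 2 ≤ N) {U : Set (Fin N → ℝ)} (hUopen : IsOpen U)
    (hUconn : IsConnected U) {b : (Fin N → ℝ) → ℝ} (hb : ContDiffOn ℝ (⊤ : ℕ∞) b U)
    (hbne : ∀ u ∈ U, b u ≠ 0)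
    (hcomp : CompatibleOn U (fun u => Matrix.diagonal (fun _ : Fin N => b u))
      (fun _ => (1 : Matrix (Fin N) (Fin N) ℝ)))
    {u : Fin N → ℝ} (hu : u ∈ U) : ∀ m, pd b m u = 0 := by
  have hNne : N ≠ 0 := by omega
  -- constant sign
  have hsign : (∀ v ∈ U, 0 < b v) ∨ (∀ v ∈ U, b v < 0) := by
    by_contra hcon
    push_neg at hcon
    obtain ⟨⟨v₁, hv₁, h1⟩, ⟨v₂, hv₂, h2⟩⟩ := hcon
    have hb1 : b v₁ < 0 := lt_of_le_of_ne h1 (hbne v₁ hv₁)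
    have hb2 : 0 < b v₂ := lt_of_le_of_ne h2 (Ne.symm (hbne v₂ hv₂))
    have hS : IsPreconnected (b '' U) := hUconn.isPreconnected.image b hb.continuousOn
    have hoc := hS.ordConnected
    have h0 : (0:ℝ) ∈ b '' U :=
      hoc.out ⟨v₁, hv₁, rfl⟩ ⟨v₂, hv₂, rfl⟩ ⟨le_of_lt hb1, le_of_lt hb2⟩
    obtain ⟨w, hw, hw0⟩ := h0
    exact hbne w hw hw0
  obtain ⟨t, ht0, hbt⟩ : ∃ t : ℝ, t ≠ 0 ∧ ∀ v ∈ U, b v + t ≠ 0 := by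
    rcases hsign with hpos | hneg
    · exact ⟨1, one_ne_zero, fun v hv => by have := hpos v hv; linarith⟩
    · exact ⟨-1, neg_ne_zero.mpr one_ne_zero, fun v hv => by have := hneg v hv; linarith⟩
  set c₂ : (Fin N → ℝ) → ℝ := fun v => b v + t with hc₂
  have hcomb : (fun v => (1:ℝ) • (fun w => Matrix.diagonal (fun _ : Fin N => b w)) v
      + t • (fun _ : Fin N → ℝ => (1 : Matrix (Fin N) (Fin N) ℝ)) v)
      = fun v => c₂ v • (1 : Matrix (Fin N) (Fin N) ℝ) := by
    funext v
    show (1:ℝ) • Matrix.diagonal (fun _ : Fin N => b v) + t • (1 : Matrix (Fin N) (Fin N) ℝ) = _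
    rw [one_smul, diag_const_eq, ← add_smul]
  have hdet : ∀ v ∈ U, IsUnit ((1:ℝ) • (fun w => Matrix.diagonal (fun _ : Fin N => b w)) v
      + t • (fun _ : Fin N → ℝ => (1 : Matrix (Fin N) (Fin N) ℝ)) v).det := by
    intro v hv
    rw [congrFun hcomb v, det_smul_one, isUnit_iff_ne_zero]
    exact pow_ne_zero _ (hbt v hv)
  have hg1 : (fun w => Matrix.diagonal (fun _ : Fin N => b w))
      = (fun v => b v • (1 : Matrix (Fin N) (Fin N) ℝ)) := funext fun v => diag_const_eq _
  have hc₂CD : ContDiffOn ℝ (⊤ : ℕ∞) c₂ U := contDiffOn_add_const hb t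
  -- the key relation 2X + Y = 0 for all indices
  have hkey : ∀ i j k l : Fin N,
      2 * (pd b k u * scf b j i l u - pd b l u * scf b j i k u)
        + (∑ p, (scf b j p k u * scf b p i l u - scf b j p l u * scf b p i k u)) = 0 := by
    intro i j k l
    have hR := (hcomp 1 t hdet u hu).2 i j k l
    rw [hcomb, hg1] at hR
    rw [riemannUp_smul_one hUopen hc₂CD hbt hu, riemannUp_smul_one hUopen hb hbne hu,
      riemannUp_one] at hR
    simp only [hc₂, scf_add_const, pd_add_const] at hR
    set X := pd b k u * scf b j i l u - pd b l u * scf b j i k u with hX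
    set Y := ∑ p, (scf b j p k u * scf b p i l u - scf b j p l u * scf b p i k u) with hY
    have he : b u ≠ 0 := hbne u hu
    have hf : b u + t ≠ 0 := hbt u hu
    field_simp at hR
    have h7 : (2*X + Y) * (64 * (b u) * (b u + t) * ((b u) - (b u + t))) = 0 := by
      linear_combination (32 * b u * (b u + t)) * hR
    have h8 : (64 : ℝ) * b u * (b u + t) * ((b u) - (b u + t)) ≠ 0 := by
      have ht' : b u - (b u + t) = -t := by ring
      rw [ht']
      exact mul_ne_zero (mul_ne_zero (mul_ne_zero (by norm_num) he) hf) (neg_ne_zero.mpr ht0)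
    have := (mul_eq_zero.mp h7).resolve_right h8
    linarith
  -- index computation
  set z0 : Fin N := ⟨0, by omega⟩ with hz0
  set z1 : Fin N := ⟨1, by omega⟩ with hz1
  have hz : z0 ≠ z1 := by simp [hz0, hz1, Fin.ext_iff]
  have hzs : z1 ≠ z0 := Ne.symm hz
  have hkey2 := hkey z0 z1 z0 z1
  have s1 : scf b z1 z0 z1 u = pd b z0 u := by simp [scf, hz, hzs]
  have s2 : scf b z1 z0 z0 u = -(pd b z1 u) := by simp [scf, hz, hzs]
  have hterm : ∀ p : Fin N, scf b z1 p z0 u * scf b p z0 z1 u - scf b z1 p z1 u * scf b p z0 z0 u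
      = (pd b p u)^2 + ((if p = z0 then -((pd b z1 u)^2) - 2*(pd b z0 u)^2 else 0)
        + (if p = z1 then (pd b z0 u)^2 else 0)) := by
    intro p
    by_cases hp0 : p = z0
    · subst hp0
      simp [scf, hz, hzs]
      ring
    · by_cases hp1 : p = z1
      · subst hp1
        simp [scf, hz, hzs, hp0]
        ring
      · simp [scf, hz, hzs, hp0, hp1, Ne.symm hp0, Ne.symm hp1]
        ring
  rw [s1, s2, Finset.sum_congr rfl (fun p _ => hterm p), Finset.sum_add_distrib,
    Finset.sum_add_distrib] at hkey2
  simp only [Finset.sum_ite_eq', Finset.mem_univ, if_true] at hkey2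
  have hnn : ∀ p ∈ Finset.univ, (0:ℝ) ≤ (pd b p u)^2 := fun p _ => sq_nonneg _
  have hS0 : ∑ p, (pd b p u)^2 = 0 := by
    have h1 := Finset.sum_nonneg hnn
    nlinarith [sq_nonneg (pd b z0 u), sq_nonneg (pd b z1 u)]
  intro m
  have := (Finset.sum_eq_zero_iff_of_nonneg hnn).mp hS0 m (Finset.mem_univ m)
  exact (pow_eq_zero_iff (by norm_num : (2:ℕ) ≠ 0)).mp this


lemma const_of_grad_zero {N : ℕ} {U : Set (Fin N → ℝ)} (hUopen : IsOpen U)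
    (hUconn : IsConnected U) {b : (Fin N → ℝ) → ℝ} (hb : ContDiffOn ℝ (⊤ : ℕ∞) b U)
    (hgrad : ∀ u ∈ U, ∀ m, pd b m u = 0) :
    ∀ u ∈ U, ∀ u' ∈ U, b u = b u' := by
  have hf0 : ∀ v ∈ U, fderiv ℝ b v = 0 := by
    intro v hv
    ext x
    have hxrep : x = ∑ i : Fin N, x i • (Pi.single i 1 : Fin N → ℝ) := by
      funext j
      simp only [Finset.sum_apply, Pi.smul_apply, Pi.single_apply, smul_eq_mul]
      rw [Finset.sum_eq_single j]
      · simp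
      · intro q _ hqj
        simp [Ne.symm hqj]
      · simp
    rw [hxrep, map_sum]
    have : ∀ i, fderiv ℝ b v (x i • (Pi.single i 1 : Fin N → ℝ)) = 0 := by
      intro i
      rw [map_smul]
      have := hgrad v hv i
      unfold pd at this
      rw [this, smul_zero]
    simp [this]
  have hloc : ∀ v ∈ U, ∃ ε > 0, Metric.ball v ε ⊆ U ∧ ∀ w ∈ Metric.ball v ε, b w = b v := by
    intro v hv
    obtain ⟨ε, hε, hball⟩ := Metric.isOpen_iff.mp hUopen v hv
    refine ⟨ε, hε, hball, fun w hw => ?_⟩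
    refine (convex_ball v ε).is_const_of_fderivWithin_eq_zero
      ((hb.differentiableOn (by simp)).mono hball) (fun z hz => ?_) hw (Metric.mem_ball_self hε)
    rw [fderivWithin_of_isOpen Metric.isOpen_ball hz]
    exact hf0 z (hball hz)
  intro u hu u' hu'
  by_contra hne
  set V : Set (Fin N → ℝ) := {v | v ∈ U ∧ b v = b u} with hV
  set W : Set (Fin N → ℝ) := {v | v ∈ U ∧ b v ≠ b u} with hW
  have hVopen : IsOpen V := by
    rw [Metric.isOpen_iff]
    rintro v ⟨hvU, hvb⟩
    obtain ⟨ε, hε, hballU, hconst⟩ := hloc v hvU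
    exact ⟨ε, hε, fun w hw => ⟨hballU hw, by rw [hconst w hw, hvb]⟩⟩
  have hWopen : IsOpen W := by
    rw [Metric.isOpen_iff]
    rintro v ⟨hvU, hvb⟩
    obtain ⟨ε, hε, hballU, hconst⟩ := hloc v hvU
    exact ⟨ε, hε, fun w hw => ⟨hballU hw, by rw [hconst w hw]; exact hvb⟩⟩
  have hcover : U ⊆ V ∪ W := by
    intro v hv
    by_cases h : b v = b u
    · exact Or.inl ⟨hv, h⟩
    · exact Or.inr ⟨hv, h⟩
  have h1 : (U ∩ V).Nonempty := ⟨u, hu, hu, rfl⟩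
  have h2 : (U ∩ W).Nonempty := ⟨u', hu', hu', fun h => hne h.symm⟩
  obtain ⟨w, _, ⟨_, hwb⟩, ⟨_, hwb'⟩⟩ := hUconn.isPreconnected V W hVopen hWopen hcover h1 h2
  exact hwb' hwb


/-- for a smooth nowhere-zero `b`, the metrics `g₁^{ij} = b(u) δ^{ij}` and
`g₂^{ij} = δ^{ij}` are always almost compatible (their Nijenhuis tensor vanishes); if
they are compatible then `b` is constant. -/
theorem conformal_factor_almost_compatible_compatible_implies_const {N : ℕ} (hN : 2 ≤ N)
    (U : Set (Fin N → ℝ)) (hUopen : IsOpen U) (hUne : U.Nonempty)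
    (hUconn : IsConnected U)
    (b : (Fin N → ℝ) → ℝ) (hb : ContDiffOn ℝ (⊤ : ℕ∞) b U) (hbne : ∀ u ∈ U, b u ≠ 0) :
    AlmostCompatibleOn U
        (fun u => Matrix.diagonal (fun _ : Fin N => b u))
        (fun _ => (1 : Matrix (Fin N) (Fin N) ℝ)) ∧
      (∀ u ∈ U, ∀ k i j,
        nijenhuis (affinor
          (fun u => Matrix.diagonal (fun _ : Fin N => b u))
          (fun _ => (1 : Matrix (Fin N) (Fin N) ℝ))) k i j u = 0) ∧
      (CompatibleOn U
          (fun u => Matrix.diagonal (fun _ : Fin N => b u))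
          (fun _ => (1 : Matrix (Fin N) (Fin N) ℝ)) →
        ∀ u ∈ U, ∀ u' ∈ U, b u = b u') := by
  refine ⟨almost_compat hN hUopen hb hbne, fun u _ k i j => nijenhuis_vanish u k i j,
    fun hcomp => const_of_grad_zero hUopen hUconn hb
      (fun u hu => grad_zero hN hUopen hUconn hb hbne hcomp hu)⟩
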